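/- The operators K₋ = A₁, K₀ = A₂ = 2t∂_t + x∂_x - p∂_p, K₊ = A₃ satisfy the sl(2,ℝ) commutation relations [K₀,K₋] = -2K₋, [K₀,K₊] = 2K₊, [K₋,K₊] = K₀. -/

import Mathlib

noncomputable def pdT (Q : ℝ → ℝ → ℝ → ℝ) (x p t : ℝ) : ℝ := deriv (fun s => Q x p s) t
noncomputable def pdX (Q : ℝ → ℝ → ℝ → ℝ) (x p t : ℝ) : ℝ := deriv (fun z => Q z p t) x
noncomputable def pdP (Q : ℝ → ℝ → ℝ → ℝ) (x p t : ℝ) : ℝ := deriv (fun z => Q x z t) p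
noncomputable def pdXX (Q : ℝ → ℝ → ℝ → ℝ) (x p t : ℝ) : ℝ :=
  deriv (fun y => deriv (fun z => Q z p t) y) x
noncomputable def pdPP (Q : ℝ → ℝ → ℝ → ℝ) (x p t : ℝ) : ℝ :=
  deriv (fun y => deriv (fun z => Q x z t) y) p

/-- The pseudo-diffusion operator `L = ∂_t - (1/4)∂_xx + (1/(4t²))∂_pp`. -/
noncomputable def Lop (Q : ℝ → ℝ → ℝ → ℝ) (x p t : ℝ) : ℝ :=
  pdT Q x p t - (1/4) * pdXX Q x p t + 1/(4*t^2) * pdPP Q x p t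

/-- Smoothness on the region `t > 0`. -/
def SmoothPos (Q : ℝ → ℝ → ℝ → ℝ) : Prop :=
  ContDiffOn ℝ (⊤ : ℕ∞) (fun v : ℝ × ℝ × ℝ => Q v.1 v.2.1 v.2.2) {v : ℝ × ℝ × ℝ | 0 < v.2.2}

/-- `K₋ = A₁ = ∂_t - (p/t)∂_p - p² - 1/(2t)`. -/
noncomputable def Kminus (Q : ℝ → ℝ → ℝ → ℝ) : ℝ → ℝ → ℝ → ℝ :=
  fun x p t => pdT Q x p t - (p/t) * pdP Q x p t - (p^2 + 1/(2*t)) * Q x p t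

/-- `K₀ = A₂ = 2t∂_t + x∂_x - p∂_p`. -/
noncomputable def Kzero (Q : ℝ → ℝ → ℝ → ℝ) : ℝ → ℝ → ℝ → ℝ :=
  fun x p t => 2*t * pdT Q x p t + x * pdX Q x p t - p * pdP Q x p t

/-- `K₊ = A₃ = t²∂_t + tx∂_x + x² + t/2`. -/
noncomputable def Kplus (Q : ℝ → ℝ → ℝ → ℝ) : ℝ → ℝ → ℝ → ℝ :=
  fun x p t => t^2 * pdT Q x p t + t*x * pdX Q x p t + (x^2 + t/2) * Q x p t

open scoped Topology

namespace Sl2Aux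

noncomputable def Fn (Q : ℝ → ℝ → ℝ → ℝ) : ℝ × ℝ × ℝ → ℝ := fun v => Q v.1 v.2.1 v.2.2

noncomputable def D (Q : ℝ → ℝ → ℝ → ℝ) (e v : ℝ × ℝ × ℝ) : ℝ := fderiv ℝ (Fn Q) v e

noncomputable def D2 (Q : ℝ → ℝ → ℝ → ℝ) (e f v : ℝ × ℝ × ℝ) : ℝ :=
  fderiv ℝ (fderiv ℝ (Fn Q)) v e f

lemma isOpen_U : IsOpen {v : ℝ × ℝ × ℝ | 0 < v.2.2} :=
  isOpen_lt continuous_const (continuous_snd.comp continuous_snd)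

variable {Q : ℝ → ℝ → ℝ → ℝ} {x p t : ℝ}

lemma cda (hQ : SmoothPos Q) (ht : 0 < t) : ContDiffAt ℝ (⊤ : ℕ∞) (Fn Q) (x, p, t) :=
  hQ.contDiffAt (isOpen_U.mem_nhds ht)

lemma line1 : HasDerivAt (fun z : ℝ => ((z, p, t) : ℝ × ℝ × ℝ)) (1, 0, 0) x :=
  (hasDerivAt_id x).prodMk (hasDerivAt_const x (p, t))

lemma line2 : HasDerivAt (fun z : ℝ => ((x, z, t) : ℝ × ℝ × ℝ)) (0, 1, 0) p :=
  (hasDerivAt_const p x).prodMk ((hasDerivAt_id p).prodMk (hasDerivAt_const p t))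

lemma line3 : HasDerivAt (fun s : ℝ => ((x, p, s) : ℝ × ℝ × ℝ)) (0, 0, 1) t :=
  (hasDerivAt_const t x).prodMk ((hasDerivAt_const t p).prodMk (hasDerivAt_id t))

lemma hQ_slice1 (hQ : SmoothPos Q) (ht : 0 < t) :
    HasDerivAt (fun z => Q z p t) (D Q (1, 0, 0) (x, p, t)) x :=
  by have := (((cda hQ ht).differentiableAt (by simp)).hasFDerivAt).comp_hasDerivAt x (line1 (p := p) (t := t)); exact this

lemma hQ_slice2 (hQ : SmoothPos Q) (ht : 0 < t) :
    HasDerivAt (fun z => Q x z t) (D Q (0, 1, 0) (x, p, t)) p :=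
  by have := (((cda hQ ht).differentiableAt (by simp)).hasFDerivAt).comp_hasDerivAt p (line2 (x := x) (t := t)); exact this

lemma hQ_slice3 (hQ : SmoothPos Q) (ht : 0 < t) :
    HasDerivAt (fun s => Q x p s) (D Q (0, 0, 1) (x, p, t)) t :=
  by have := (((cda hQ ht).differentiableAt (by simp)).hasFDerivAt).comp_hasDerivAt t (line3 (x := x) (p := p)); exact this

lemma pdX_eq (hQ : SmoothPos Q) (ht : 0 < t) : pdX Q x p t = D Q (1, 0, 0) (x, p, t) :=
  (hQ_slice1 hQ ht).deriv

lemma pdP_eq (hQ : SmoothPos Q) (ht : 0 < t) : pdP Q x p t = D Q (0, 1, 0) (x, p, t) :=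
  (hQ_slice2 hQ ht).deriv

lemma pdT_eq (hQ : SmoothPos Q) (ht : 0 < t) : pdT Q x p t = D Q (0, 0, 1) (x, p, t) :=
  (hQ_slice3 hQ ht).deriv

lemma hasFDerivAt_D (hQ : SmoothPos Q) (ht : 0 < t) (e : ℝ × ℝ × ℝ) :
    HasFDerivAt (D Q e) ((fderiv ℝ (fderiv ℝ (Fn Q)) (x, p, t)).flip e) (x, p, t) := by
  have hcd : ContDiffOn ℝ (⊤ : ℕ∞) (fderiv ℝ (Fn Q)) {v : ℝ × ℝ × ℝ | 0 < v.2.2} :=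
    hQ.fderiv_of_isOpen isOpen_U (by simp)
  have hdiff : DifferentiableAt ℝ (fderiv ℝ (Fn Q)) (x, p, t) :=
    (hcd.contDiffAt (isOpen_U.mem_nhds ht)).differentiableAt (by simp)
  have h := hdiff.hasFDerivAt.clm_apply (hasFDerivAt_const e (x, p, t))
  simp at h; exact h

lemma D_slice1 (hQ : SmoothPos Q) (ht : 0 < t) (e : ℝ × ℝ × ℝ) :
    HasDerivAt (fun z => D Q e (z, p, t)) (D2 Q (1, 0, 0) e (x, p, t)) x :=
  by have := (hasFDerivAt_D hQ ht e).comp_hasDerivAt x (line1 (p := p) (t := t)); exact this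

lemma D_slice2 (hQ : SmoothPos Q) (ht : 0 < t) (e : ℝ × ℝ × ℝ) :
    HasDerivAt (fun z => D Q e (x, z, t)) (D2 Q (0, 1, 0) e (x, p, t)) p :=
  by have := (hasFDerivAt_D hQ ht e).comp_hasDerivAt p (line2 (x := x) (t := t)); exact this

lemma D_slice3 (hQ : SmoothPos Q) (ht : 0 < t) (e : ℝ × ℝ × ℝ) :
    HasDerivAt (fun s => D Q e (x, p, s)) (D2 Q (0, 0, 1) e (x, p, t)) t :=
  by have := (hasFDerivAt_D hQ ht e).comp_hasDerivAt t (line3 (x := x) (p := p)); exact this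

lemma Dsym (hQ : SmoothPos Q) (ht : 0 < t) (a b : ℝ × ℝ × ℝ) :
    D2 Q a b (x, p, t) = D2 Q b a (x, p, t) :=
  ((cda hQ ht).isSymmSndFDerivAt (by rw [minSmoothness_of_isRCLikeNormedField]; exact WithTop.coe_le_coe.mpr (le_top : (2 : ℕ∞) ≤ ⊤))).eq a b


lemma pdX_slice1 (hQ : SmoothPos Q) (ht : 0 < t) :
    HasDerivAt (fun z => pdX Q z p t) (D2 Q (1, 0, 0) (1, 0, 0) (x, p, t)) x :=
  (D_slice1 hQ ht _).congr_of_eventuallyEq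
    (Filter.Eventually.of_forall fun z => pdX_eq hQ ht)

lemma pdP_slice1 (hQ : SmoothPos Q) (ht : 0 < t) :
    HasDerivAt (fun z => pdP Q z p t) (D2 Q (1, 0, 0) (0, 1, 0) (x, p, t)) x :=
  (D_slice1 hQ ht _).congr_of_eventuallyEq
    (Filter.Eventually.of_forall fun z => pdP_eq hQ ht)

lemma pdT_slice1 (hQ : SmoothPos Q) (ht : 0 < t) :
    HasDerivAt (fun z => pdT Q z p t) (D2 Q (1, 0, 0) (0, 0, 1) (x, p, t)) x :=
  (D_slice1 hQ ht _).congr_of_eventuallyEq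
    (Filter.Eventually.of_forall fun z => pdT_eq hQ ht)

lemma pdX_slice2 (hQ : SmoothPos Q) (ht : 0 < t) :
    HasDerivAt (fun z => pdX Q x z t) (D2 Q (0, 1, 0) (1, 0, 0) (x, p, t)) p :=
  (D_slice2 hQ ht _).congr_of_eventuallyEq
    (Filter.Eventually.of_forall fun z => pdX_eq hQ ht)

lemma pdP_slice2 (hQ : SmoothPos Q) (ht : 0 < t) :
    HasDerivAt (fun z => pdP Q x z t) (D2 Q (0, 1, 0) (0, 1, 0) (x, p, t)) p :=
  (D_slice2 hQ ht _).congr_of_eventuallyEq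
    (Filter.Eventually.of_forall fun z => pdP_eq hQ ht)

lemma pdT_slice2 (hQ : SmoothPos Q) (ht : 0 < t) :
    HasDerivAt (fun z => pdT Q x z t) (D2 Q (0, 1, 0) (0, 0, 1) (x, p, t)) p :=
  (D_slice2 hQ ht _).congr_of_eventuallyEq
    (Filter.Eventually.of_forall fun z => pdT_eq hQ ht)

lemma pdX_slice3 (hQ : SmoothPos Q) (ht : 0 < t) :
    HasDerivAt (fun s => pdX Q x p s) (D2 Q (0, 0, 1) (1, 0, 0) (x, p, t)) t := by
  refine (D_slice3 hQ ht _).congr_of_eventuallyEq ?_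
  filter_upwards [eventually_gt_nhds ht] with s hs
  exact pdX_eq hQ hs

lemma pdP_slice3 (hQ : SmoothPos Q) (ht : 0 < t) :
    HasDerivAt (fun s => pdP Q x p s) (D2 Q (0, 0, 1) (0, 1, 0) (x, p, t)) t := by
  refine (D_slice3 hQ ht _).congr_of_eventuallyEq ?_
  filter_upwards [eventually_gt_nhds ht] with s hs
  exact pdP_eq hQ hs

lemma pdT_slice3 (hQ : SmoothPos Q) (ht : 0 < t) :
    HasDerivAt (fun s => pdT Q x p s) (D2 Q (0, 0, 1) (0, 0, 1) (x, p, t)) t := by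
  refine (D_slice3 hQ ht _).congr_of_eventuallyEq ?_
  filter_upwards [eventually_gt_nhds ht] with s hs
  exact pdT_eq hQ hs


lemma pdT_Kminus (hQ : SmoothPos Q) (ht : 0 < t) :
    pdT (Kminus Q) x p t =
      D2 Q (0,0,1) (0,0,1) (x,p,t) + p/t^2 * D Q (0,1,0) (x,p,t)
        - p/t * D2 Q (0,0,1) (0,1,0) (x,p,t) + 1/(2*t^2) * Q x p t
        - (p^2 + 1/(2*t)) * D Q (0,0,1) (x,p,t) := by
  have h := ((pdT_slice3 (x := x) (p := p) (t := t) hQ ht).sub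
      (((hasDerivAt_const t p).div (hasDerivAt_id t) ht.ne').mul
        (pdP_slice3 (x := x) (p := p) (t := t) hQ ht))).sub
      (((hasDerivAt_const t (p^2)).add
        ((hasDerivAt_const t (1:ℝ)).div ((hasDerivAt_id t).const_mul 2) (by positivity))).mul
        (hQ_slice3 (x := x) (p := p) (t := t) hQ ht))
  have h2 : deriv (fun s => Kminus Q x p s) t = _ := h.deriv
  simp only [pdT]
  rw [h2]
  try simp only [pdX_eq hQ ht, pdP_eq hQ ht, pdT_eq hQ ht, id_eq, Pi.div_apply, Pi.add_apply]
  have ht' : t ≠ 0 := ht.ne'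
  field_simp
  try ring


lemma pdX_Kminus (hQ : SmoothPos Q) (ht : 0 < t) :
    pdX (Kminus Q) x p t =
      D2 Q (1,0,0) (0,0,1) (x,p,t) - p/t * D2 Q (1,0,0) (0,1,0) (x,p,t)
        - (p^2 + 1/(2*t)) * D Q (1,0,0) (x,p,t) := by
  have h := ((pdT_slice1 (x := x) (p := p) (t := t) hQ ht).sub
      ((pdP_slice1 (x := x) (p := p) (t := t) hQ ht).const_mul (p/t))).sub
      ((hQ_slice1 (x := x) (p := p) (t := t) hQ ht).const_mul (p^2 + 1/(2*t)))
  have h2 : deriv (fun z => Kminus Q z p t) x = _ := h.deriv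
  simp only [pdX]
  rw [h2]
  try simp only [pdX_eq hQ ht, pdP_eq hQ ht, pdT_eq hQ ht, id_eq]
  try ring

lemma pdP_Kminus (hQ : SmoothPos Q) (ht : 0 < t) :
    pdP (Kminus Q) x p t =
      D2 Q (0,1,0) (0,0,1) (x,p,t) - 1/t * D Q (0,1,0) (x,p,t)
        - p/t * D2 Q (0,1,0) (0,1,0) (x,p,t) - 2*p * Q x p t
        - (p^2 + 1/(2*t)) * D Q (0,1,0) (x,p,t) := by
  have h := ((pdT_slice2 (x := x) (p := p) (t := t) hQ ht).sub
      (((hasDerivAt_id p).div_const t).mul (pdP_slice2 (x := x) (p := p) (t := t) hQ ht))).sub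
      (((hasDerivAt_pow 2 p).add_const (1/(2*t))).mul (hQ_slice2 (x := x) (p := p) (t := t) hQ ht))
  have h2 : deriv (fun z => Kminus Q x z t) p = _ := h.deriv
  simp only [pdP]
  rw [h2]
  try simp only [pdX_eq hQ ht, pdP_eq hQ ht, pdT_eq hQ ht, id_eq]
  have ht' : t ≠ 0 := ht.ne'
  field_simp
  try ring

lemma pdT_Kzero (hQ : SmoothPos Q) (ht : 0 < t) :
    pdT (Kzero Q) x p t =
      2 * D Q (0,0,1) (x,p,t) + 2*t * D2 Q (0,0,1) (0,0,1) (x,p,t)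
        + x * D2 Q (0,0,1) (1,0,0) (x,p,t) - p * D2 Q (0,0,1) (0,1,0) (x,p,t) := by
  have h := ((((hasDerivAt_id t).const_mul 2).mul (pdT_slice3 (x := x) (p := p) (t := t) hQ ht)).add
      ((pdX_slice3 (x := x) (p := p) (t := t) hQ ht).const_mul x)).sub
      ((pdP_slice3 (x := x) (p := p) (t := t) hQ ht).const_mul p)
  have h2 : deriv (fun s => Kzero Q x p s) t = _ := h.deriv
  simp only [pdT]
  rw [h2]
  try simp only [pdX_eq hQ ht, pdP_eq hQ ht, pdT_eq hQ ht, id_eq]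
  try ring

lemma pdX_Kzero (hQ : SmoothPos Q) (ht : 0 < t) :
    pdX (Kzero Q) x p t =
      2*t * D2 Q (1,0,0) (0,0,1) (x,p,t) + D Q (1,0,0) (x,p,t)
        + x * D2 Q (1,0,0) (1,0,0) (x,p,t) - p * D2 Q (1,0,0) (0,1,0) (x,p,t) := by
  have h := (((pdT_slice1 (x := x) (p := p) (t := t) hQ ht).const_mul (2*t)).add
      ((hasDerivAt_id x).mul (pdX_slice1 (x := x) (p := p) (t := t) hQ ht))).sub
      ((pdP_slice1 (x := x) (p := p) (t := t) hQ ht).const_mul p)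
  have h2 : deriv (fun z => Kzero Q z p t) x = _ := h.deriv
  simp only [pdX]
  rw [h2]
  try simp only [pdX_eq hQ ht, pdP_eq hQ ht, pdT_eq hQ ht, id_eq]
  try ring

lemma pdP_Kzero (hQ : SmoothPos Q) (ht : 0 < t) :
    pdP (Kzero Q) x p t =
      2*t * D2 Q (0,1,0) (0,0,1) (x,p,t) + x * D2 Q (0,1,0) (1,0,0) (x,p,t)
        - D Q (0,1,0) (x,p,t) - p * D2 Q (0,1,0) (0,1,0) (x,p,t) := by
  have h := (((pdT_slice2 (x := x) (p := p) (t := t) hQ ht).const_mul (2*t)).add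
      ((pdX_slice2 (x := x) (p := p) (t := t) hQ ht).const_mul x)).sub
      ((hasDerivAt_id p).mul (pdP_slice2 (x := x) (p := p) (t := t) hQ ht))
  have h2 : deriv (fun z => Kzero Q x z t) p = _ := h.deriv
  simp only [pdP]
  rw [h2]
  try simp only [pdX_eq hQ ht, pdP_eq hQ ht, pdT_eq hQ ht, id_eq]
  try ring

lemma pdT_Kplus (hQ : SmoothPos Q) (ht : 0 < t) :
    pdT (Kplus Q) x p t =
      2*t * D Q (0,0,1) (x,p,t) + t^2 * D2 Q (0,0,1) (0,0,1) (x,p,t)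
        + x * D Q (1,0,0) (x,p,t) + t*x * D2 Q (0,0,1) (1,0,0) (x,p,t)
        + 1/2 * Q x p t + (x^2 + t/2) * D Q (0,0,1) (x,p,t) := by
  have h := (((hasDerivAt_pow 2 t).mul (pdT_slice3 (x := x) (p := p) (t := t) hQ ht)).add
      (((hasDerivAt_id t).mul_const x).mul (pdX_slice3 (x := x) (p := p) (t := t) hQ ht))).add
      (((hasDerivAt_const t (x^2)).add ((hasDerivAt_id t).div_const 2)).mul
        (hQ_slice3 (x := x) (p := p) (t := t) hQ ht))
  have h2 : deriv (fun s => Kplus Q x p s) t = _ := h.deriv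
  simp only [pdT]
  rw [h2]
  try simp only [pdX_eq hQ ht, pdP_eq hQ ht, pdT_eq hQ ht, id_eq, Pi.add_apply]
  try ring

lemma pdX_Kplus (hQ : SmoothPos Q) (ht : 0 < t) :
    pdX (Kplus Q) x p t =
      t^2 * D2 Q (1,0,0) (0,0,1) (x,p,t) + t * D Q (1,0,0) (x,p,t)
        + t*x * D2 Q (1,0,0) (1,0,0) (x,p,t) + 2*x * Q x p t
        + (x^2 + t/2) * D Q (1,0,0) (x,p,t) := by
  have h := (((pdT_slice1 (x := x) (p := p) (t := t) hQ ht).const_mul (t^2)).add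
      (((hasDerivAt_id x).const_mul t).mul (pdX_slice1 (x := x) (p := p) (t := t) hQ ht))).add
      (((hasDerivAt_pow 2 x).add_const (t/2)).mul (hQ_slice1 (x := x) (p := p) (t := t) hQ ht))
  have h2 : deriv (fun z => Kplus Q z p t) x = _ := h.deriv
  simp only [pdX]
  rw [h2]
  try simp only [pdX_eq hQ ht, pdP_eq hQ ht, pdT_eq hQ ht, id_eq]
  try ring

lemma pdP_Kplus (hQ : SmoothPos Q) (ht : 0 < t) :
    pdP (Kplus Q) x p t =
      t^2 * D2 Q (0,1,0) (0,0,1) (x,p,t) + t*x * D2 Q (0,1,0) (1,0,0) (x,p,t)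
        + (x^2 + t/2) * D Q (0,1,0) (x,p,t) := by
  have h := (((pdT_slice2 (x := x) (p := p) (t := t) hQ ht).const_mul (t^2)).add
      ((pdX_slice2 (x := x) (p := p) (t := t) hQ ht).const_mul (t*x))).add
      ((hQ_slice2 (x := x) (p := p) (t := t) hQ ht).const_mul (x^2 + t/2))
  have h2 : deriv (fun z => Kplus Q x z t) p = _ := h.deriv
  simp only [pdP]
  rw [h2]
  try simp only [pdX_eq hQ ht, pdP_eq hQ ht, pdT_eq hQ ht, id_eq]
  try ring

end Sl2Aux

open Sl2Aux in
/-- `K₋, K₀, K₊` satisfy the `sl(2,ℝ)` commutation relations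
`[K₀,K₋] = -2K₋`, `[K₀,K₊] = 2K₊`, `[K₋,K₊] = K₀`. -/
theorem stmt9 (Q : ℝ → ℝ → ℝ → ℝ) (hQ : SmoothPos Q) :
    (∀ x p t : ℝ, 0 < t →
      Kzero (Kminus Q) x p t - Kminus (Kzero Q) x p t = -2 * Kminus Q x p t) ∧
    (∀ x p t : ℝ, 0 < t →
      Kzero (Kplus Q) x p t - Kplus (Kzero Q) x p t = 2 * Kplus Q x p t) ∧
    (∀ x p t : ℝ, 0 < t →
      Kminus (Kplus Q) x p t - Kplus (Kminus Q) x p t = Kzero Q x p t) := by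
  refine ⟨?_, ?_, ?_⟩
  · intro x p t ht
    have ht' : t ≠ 0 := ht.ne'
    rw [show Kzero (Kminus Q) x p t
          = 2*t * pdT (Kminus Q) x p t + x * pdX (Kminus Q) x p t - p * pdP (Kminus Q) x p t
          from rfl,
        show Kminus (Kzero Q) x p t
          = pdT (Kzero Q) x p t - (p/t) * pdP (Kzero Q) x p t
              - (p^2 + 1/(2*t)) * Kzero Q x p t from rfl,
        show Kminus Q x p t
          = pdT Q x p t - (p/t) * pdP Q x p t - (p^2 + 1/(2*t)) * Q x p t from rfl,
        show Kzero Q x p t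
          = 2*t * pdT Q x p t + x * pdX Q x p t - p * pdP Q x p t from rfl,
        pdT_Kminus hQ ht, pdX_Kminus hQ ht, pdP_Kminus hQ ht,
        pdT_Kzero hQ ht, pdP_Kzero hQ ht,
        pdT_eq hQ ht, pdX_eq hQ ht, pdP_eq hQ ht,
        Dsym hQ ht (0,0,1) (1,0,0), Dsym hQ ht (0,0,1) (0,1,0),
        Dsym hQ ht (0,1,0) (1,0,0)]
    field_simp
    ring
  · intro x p t ht
    have ht' : t ≠ 0 := ht.ne'
    rw [show Kzero (Kplus Q) x p t
          = 2*t * pdT (Kplus Q) x p t + x * pdX (Kplus Q) x p t - p * pdP (Kplus Q) x p t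
          from rfl,
        show Kplus (Kzero Q) x p t
          = t^2 * pdT (Kzero Q) x p t + t*x * pdX (Kzero Q) x p t
              + (x^2 + t/2) * Kzero Q x p t from rfl,
        show Kplus Q x p t
          = t^2 * pdT Q x p t + t*x * pdX Q x p t + (x^2 + t/2) * Q x p t from rfl,
        show Kzero Q x p t
          = 2*t * pdT Q x p t + x * pdX Q x p t - p * pdP Q x p t from rfl,
        pdT_Kplus hQ ht, pdX_Kplus hQ ht, pdP_Kplus hQ ht,
        pdT_Kzero hQ ht, pdX_Kzero hQ ht,
        pdT_eq hQ ht, pdX_eq hQ ht, pdP_eq hQ ht,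
        Dsym hQ ht (0,0,1) (1,0,0), Dsym hQ ht (0,0,1) (0,1,0),
        Dsym hQ ht (0,1,0) (1,0,0)]
    field_simp
    ring
  · intro x p t ht
    have ht' : t ≠ 0 := ht.ne'
    rw [show Kminus (Kplus Q) x p t
          = pdT (Kplus Q) x p t - (p/t) * pdP (Kplus Q) x p t
              - (p^2 + 1/(2*t)) * Kplus Q x p t from rfl,
        show Kplus (Kminus Q) x p t
          = t^2 * pdT (Kminus Q) x p t + t*x * pdX (Kminus Q) x p t
              + (x^2 + t/2) * Kminus Q x p t from rfl,
        show Kplus Q x p t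
          = t^2 * pdT Q x p t + t*x * pdX Q x p t + (x^2 + t/2) * Q x p t from rfl,
        show Kminus Q x p t
          = pdT Q x p t - (p/t) * pdP Q x p t - (p^2 + 1/(2*t)) * Q x p t from rfl,
        show Kzero Q x p t
          = 2*t * pdT Q x p t + x * pdX Q x p t - p * pdP Q x p t from rfl,
        pdT_Kplus hQ ht, pdP_Kplus hQ ht, pdT_Kminus hQ ht, pdX_Kminus hQ ht,
        pdT_eq hQ ht, pdX_eq hQ ht, pdP_eq hQ ht,
        Dsym hQ ht (0,0,1) (1,0,0), Dsym hQ ht (0,0,1) (0,1,0),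
        Dsym hQ ht (0,1,0) (1,0,0)]
    field_simp
    ring
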